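/- Let q, a, b, c, d, x ∈ ℂ with 0 < |q| < 1, x ≠ 0, and let k ≤ n be natural numbers. Assume 1 - a q^j x ≠ 0 and 1 - b q^j x ≠ 0 for 0 ≤ j ≤ k - 1, and 1 - c q^j x ≠ 0 and 1 - d q^j x ≠ 0 for 0 ≤ j ≤ n + k - 1. Then the k-th iterate of the q-differential operator applied to t ↦ (a t;q)_n (b t;q)_n / ((c t;q)_n (d t;q)_n), evaluated at x, equals (q;q)_n^2 (a x;q)_n (b x;q)_n · ∑_{i=0}^{k} [k choose i]_q (q^{C(i,2)}/(b x;q)_i) · ( ∑_{j=0}^{i} [i choose j]_q q^{j(j-i)} (-a)^j (-b)^{i-j} (b q^n x;q)_j / ((q;q)_{n-j} (q;q)_{n-i+j} (a x;q)_j) ) · (1/((c q^i x;q)_n (d q^i x;q)_n (d q^{n+i} x;q)_{k-i})) · ∑_{l=0}^{k-i} [k-i choose l]_q (q^n;q)_l (q^n;q)_{k-i-l} (d q^i x;q)_l c^l d^{k-i-l} / (c q^{n+i} x;q)_l. -/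

import Mathlib

/-- The finite q-shifted factorial (a;q)_n = ∏_{j=0}^{n-1} (1 - a q^j). -/
noncomputable def qPoch (q a : ℂ) (n : ℕ) : ℂ :=
  ∏ j ∈ Finset.range n, (1 - a * q ^ j)

/-- The q-binomial coefficient [n choose k]_q = (q;q)_n / ((q;q)_k (q;q)_{n-k}). -/
noncomputable def qBinom (q : ℂ) (n k : ℕ) : ℂ :=
  qPoch q q n / (qPoch q q k * qPoch q q (n - k))

/-- The q-differential operator: (D_q f)(x) = (f(x) - f(qx))/x. -/
noncomputable def Dq (q : ℂ) (f : ℂ → ℂ) : ℂ → ℂ :=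
  fun x => (f x - f (q * x)) / x

/-! By the q-Leibniz rule `D_q^k (f g)(x) = ∑ [k i]_q (D_q^i f)(x) (D_q^(k-i) g)(q^i x)`, applied
once to split off `1/((c t;q)_n (d t;q)_n)` and once inside each of the two factors, everything
reduces to the closed forms
  `D_q^k (a t;q)_n = (-a)^k q^C(k,2) (q^(n-k+1);q)_k (a q^k x;q)_(n-k)`   (k ≤ n),
  `D_q^k 1/(c t;q)_n = c^k (q^n;q)_k / (c x;q)_(n+k)`,
each obtained by iterating the first-order rule. Writing `(q;q)_n / (q;q)_(n-k)` as
`(q^(n-k+1);q)_k` keeps the first one free of division; the rest is bookkeeping with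
`(a;q)_(m+n) = (a;q)_m (a q^m;q)_n`. -/

open Finset Function

lemma choose_two_add (m n : ℕ) : (m + n).choose 2 = m.choose 2 + n.choose 2 + m * n := by
  induction n with
  | zero => simp
  | succ n ih =>
    rw [← Nat.add_assoc, Nat.choose_succ_succ', Nat.choose_succ_succ' n, ih,
      Nat.choose_one_right, Nat.choose_one_right]
    ring

variable {q : ℂ}

lemma qPoch_zero (q a : ℂ) : qPoch q a 0 = 1 := prod_range_zero _

lemma qPoch_succ (q a : ℂ) (n : ℕ) : qPoch q a (n + 1) = qPoch q a n * (1 - a * q ^ n) :=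
  prod_range_succ _ _

lemma qPoch_succ' (q a : ℂ) (n : ℕ) : qPoch q a (n + 1) = (1 - a) * qPoch q (a * q) n := by
  rw [qPoch, prod_range_succ', pow_zero, mul_one, mul_comm]
  simp only [qPoch, pow_succ', mul_assoc]

lemma qPoch_add (q a : ℂ) (m n : ℕ) :
    qPoch q a (m + n) = qPoch q a m * qPoch q (a * q ^ m) n := by
  simp only [qPoch, prod_range_add, pow_add, mul_assoc]

lemma qPoch_mul_add (q a x : ℂ) (m n : ℕ) :
    qPoch q (a * x) (m + n) = qPoch q (a * x) m * qPoch q (a * q ^ m * x) n := by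
  rw [qPoch_add, mul_right_comm a x]

lemma qPoch_ne_zero {a : ℂ} {n : ℕ} (h : ∀ j < n, 1 - a * q ^ j ≠ 0) : qPoch q a n ≠ 0 :=
  prod_ne_zero_iff.mpr fun j hj => h j (mem_range.mp hj)

lemma qPoch_ne_zero_of_le {a : ℂ} {m n : ℕ} (h : qPoch q a n ≠ 0) (hmn : m ≤ n) :
    qPoch q a m ≠ 0 := by
  obtain ⟨l, rfl⟩ := Nat.exists_eq_add_of_le hmn
  exact left_ne_zero_of_mul (qPoch_add q a m l ▸ h)

lemma qPoch_mul_pow_mul_ne_zero {a x : ℂ} {m n : ℕ} (h : qPoch q (a * x) (m + n) ≠ 0) :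
    qPoch q (a * (q ^ m * x)) n ≠ 0 := by
  rw [← mul_assoc]
  exact right_ne_zero_of_mul (qPoch_mul_add q a x m n ▸ h)

lemma qPoch_self_ne_zero (hq : ¬IsOfFinOrder q) (n : ℕ) : qPoch q q n ≠ 0 :=
  qPoch_ne_zero fun j _ h => hq <| isOfFinOrder_iff_pow_eq_one.mpr
    ⟨j + 1, j.succ_pos, by rw [pow_succ']; linear_combination -h⟩

lemma qBinom_zero_right (hq : ¬IsOfFinOrder q) (n : ℕ) : qBinom q n 0 = 1 := by
  simp [qBinom, qPoch_zero, div_self (qPoch_self_ne_zero hq n)]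

lemma qBinom_self (hq : ¬IsOfFinOrder q) (n : ℕ) : qBinom q n n = 1 := by
  simp [qBinom, qPoch_zero, div_self (qPoch_self_ne_zero hq n)]

lemma qBinom_succ (hq : ¬IsOfFinOrder q) {k i : ℕ} (hi : 0 < i) (hik : i ≤ k) :
    qBinom q (k + 1) i = qBinom q k (i - 1) + q ^ i * qBinom q k i := by
  obtain ⟨j, rfl⟩ : ∃ j, i = j + 1 := ⟨i - 1, by omega⟩
  obtain ⟨m, rfl⟩ : ∃ m, k = j + 1 + m := ⟨k - (j + 1), by omega⟩
  have e1 : j + 1 + m + 1 - (j + 1) = m + 1 := by omega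
  have e2 : j + 1 + m - j = m + 1 := by omega
  have e3 : j + 1 + m - (j + 1) = m := by omega
  simp only [qBinom, Nat.add_sub_cancel, e1, e2, e3]
  have hfactor (l : ℕ) : 1 - q * q ^ l ≠ 0 :=
    right_ne_zero_of_mul (qPoch_succ q q l ▸ qPoch_self_ne_zero hq (l + 1))
  rw [qPoch_succ q q (j + 1 + m), qPoch_succ q q j, qPoch_succ q q m]
  field_simp [qPoch_self_ne_zero hq, hfactor]
  ring

lemma sum_qBinom_succ_mul (hq : ¬IsOfFinOrder q) (k : ℕ) (u : ℕ → ℂ) :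
    ∑ i ∈ range (k + 2), qBinom q (k + 1) i * u i =
      ∑ i ∈ range (k + 1), qBinom q k i * u (i + 1) +
        ∑ i ∈ range (k + 1), q ^ i * qBinom q k i * u i := by
  rw [sum_range_succ', sum_range_succ, sum_range_succ _ k, sum_range_succ' _ k,
    qBinom_self hq, qBinom_self hq, qBinom_zero_right hq, qBinom_zero_right hq]
  have hpascal : ∀ i ∈ range k, qBinom q (k + 1) (i + 1) * u (i + 1) =
      qBinom q k i * u (i + 1) + q ^ (i + 1) * qBinom q k (i + 1) * u (i + 1) := fun i hi => by
    rw [qBinom_succ hq (by omega : 0 < i + 1) (mem_range.mp hi), Nat.add_sub_cancel]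
    ring
  rw [sum_congr rfl hpascal, sum_add_distrib]
  ring

lemma Dq_congr {F G : ℂ → ℂ} {x : ℂ} (h₀ : F x = G x) (h₁ : F (q * x) = G (q * x)) :
    Dq q F x = Dq q G x := by
  simp only [Dq, h₀, h₁]

lemma Dq_iterate_congr {F G : ℂ → ℂ} :
    ∀ (k : ℕ) {x : ℂ}, (∀ j ≤ k, F (q ^ j * x) = G (q ^ j * x)) →
      (Dq q)^[k] F x = (Dq q)^[k] G x
  | 0, x, h => by simpa using h 0 le_rfl
  | k + 1, x, h => by
    rw [iterate_succ_apply', iterate_succ_apply']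
    refine Dq_congr (Dq_iterate_congr k fun j hj => h j (by omega))
      (Dq_iterate_congr k fun j hj => ?_)
    rw [← mul_assoc, ← pow_succ]
    exact h (j + 1) (by omega)

lemma Dq_const_mul (r : ℂ) (F : ℂ → ℂ) (x : ℂ) :
    Dq q (fun t => r * F t) x = r * Dq q F x := by
  simp only [Dq, ← mul_sub, mul_div_assoc]

lemma Dq_iterate_const_mul (r : ℂ) (k : ℕ) :
    ∀ (F : ℂ → ℂ) (x : ℂ), (Dq q)^[k] (fun t => r * F t) x = r * (Dq q)^[k] F x := by
  induction k with
  | zero => simp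
  | succ k ih =>
    intro F x
    rw [iterate_succ_apply, iterate_succ_apply, ← ih]
    exact congrArg (fun G => (Dq q)^[k] G x) (funext (Dq_const_mul r F))

lemma Dq_sum {ι : Type*} (s : Finset ι) (F : ι → ℂ → ℂ) (x : ℂ) :
    Dq q (fun t => ∑ i ∈ s, F i t) x = ∑ i ∈ s, Dq q (F i) x := by
  simp only [Dq, ← sum_sub_distrib, sum_div]

lemma Dq_mul (f g : ℂ → ℂ) (x : ℂ) :
    Dq q (fun t => f t * g t) x = Dq q f x * g (q * x) + f x * Dq q g x := by
  simp only [Dq]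
  ring

lemma Dq_comp_mul (h : ℂ → ℂ) (r x : ℂ) :
    Dq q (fun t => h (r * t)) x = r * Dq q h (r * x) := by
  rcases eq_or_ne r 0 with rfl | hr
  · simp [Dq]
  simp only [Dq]
  rw [mul_left_comm q r x, mul_div_assoc', mul_div_mul_left _ _ hr]

theorem Dq_iterate_mul (hq : q ≠ 0) (hq' : ¬IsOfFinOrder q) (f g : ℂ → ℂ) :
    ∀ (k : ℕ) {x : ℂ}, x ≠ 0 → (Dq q)^[k] (fun t => f t * g t) x =
      ∑ i ∈ range (k + 1), qBinom q k i * ((Dq q)^[i] f x * (Dq q)^[k - i] g (q ^ i * x))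
  | 0, x, _ => by simp [qBinom_zero_right hq']
  | k + 1, x, hx => by
    set u : ℕ → ℂ := fun i => (Dq q)^[i] f x * (Dq q)^[k + 1 - i] g (q ^ i * x)
    have hsum : Dq q ((Dq q)^[k] (fun t => f t * g t)) x = Dq q (fun y => ∑ i ∈ range (k + 1),
        qBinom q k i * ((Dq q)^[i] f y * (Dq q)^[k - i] g (q ^ i * y))) x :=
      Dq_congr (Dq_iterate_mul hq hq' f g k hx) (Dq_iterate_mul hq hq' f g k (mul_ne_zero hq hx))
    have hterm : ∀ i ∈ range (k + 1),
        Dq q (fun y => qBinom q k i * ((Dq q)^[i] f y * (Dq q)^[k - i] g (q ^ i * y))) x =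
          qBinom q k i * u (i + 1) + q ^ i * qBinom q k i * u i := fun i hi => by
      have hik : k + 1 - i = k - i + 1 := by have := mem_range.mp hi; omega
      simp only [u, Dq_const_mul, Dq_mul, Dq_comp_mul, Nat.add_sub_add_right, hik,
        iterate_succ_apply', pow_succ, mul_assoc]
      ring
    rw [iterate_succ_apply', hsum, Dq_sum, sum_congr rfl hterm, sum_add_distrib,
      ← sum_qBinom_succ_mul hq' k u]

lemma Dq_qPoch (a : ℂ) (n : ℕ) {x : ℂ} (hx : x ≠ 0) :
    Dq q (fun t => qPoch q (a * t) (n + 1)) x = -a * (1 - q ^ (n + 1)) * qPoch q (a * q * x) n := by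
  simp only [Dq]
  rw [qPoch_succ', qPoch_succ, div_eq_iff hx, mul_right_comm a x q, ← mul_assoc a q x]
  ring

theorem Dq_iterate_qPoch (hq : q ≠ 0) :
    ∀ (k : ℕ) {a : ℂ} {n : ℕ} {x : ℂ}, k ≤ n → x ≠ 0 →
      (Dq q)^[k] (fun t => qPoch q (a * t) n) x =
        (-a) ^ k * q ^ k.choose 2 * qPoch q (q ^ (n - k + 1)) k * qPoch q (a * q ^ k * x) (n - k)
  | 0, a, n, x, _, _ => by simp [qPoch_zero]
  | k + 1, a, n, x, hkn, hx => by
    obtain ⟨m, rfl⟩ : ∃ m, n = m + 1 := ⟨n - 1, by omega⟩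
    have hD : ∀ j ≤ k, Dq q (fun t => qPoch q (a * t) (m + 1)) (q ^ j * x) =
        -a * (1 - q ^ (m + 1)) * qPoch q (a * q * (q ^ j * x)) m :=
      fun j _ => Dq_qPoch a m (mul_ne_zero (pow_ne_zero j hq) hx)
    have hpow : q ^ (m - k + 1) * q ^ k = q ^ (m + 1) := by
      rw [← pow_add]; congr 1; omega
    rw [iterate_succ_apply,
      Dq_iterate_congr (G := fun t => -a * (1 - q ^ (m + 1)) * qPoch q (a * q * t) m) k hD,
      Dq_iterate_const_mul, Dq_iterate_qPoch hq k (by omega) hx, Nat.add_sub_add_right,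
      qPoch_succ, hpow, Nat.choose_succ_succ', Nat.choose_one_right,
      show a * q * q ^ k * x = a * q ^ (k + 1) * x by ring]
    ring

lemma Dq_inv_qPoch (c : ℂ) (n : ℕ) {x : ℂ} (hx : x ≠ 0)
    (hc : qPoch q (c * x) (n + 1) ≠ 0) :
    Dq q (fun t => 1 / qPoch q (c * t) n) x = c * (1 - q ^ n) * (1 / qPoch q (c * x) (n + 1)) := by
  have h₁ := qPoch_succ q (c * x) n
  have h₂ := qPoch_succ' q (c * x) n
  have hA := left_ne_zero_of_mul (h₁ ▸ hc)
  have hA' := right_ne_zero_of_mul (h₁ ▸ hc)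
  have hB := right_ne_zero_of_mul (h₂ ▸ hc)
  have h := h₁.symm.trans h₂
  simp only [Dq]
  rw [show c * (q * x) = c * x * q by ring, h₁]
  field_simp
  linear_combination -h

theorem Dq_iterate_inv_qPoch (hq : q ≠ 0) :
    ∀ (k : ℕ) {c : ℂ} {n : ℕ} {x : ℂ}, x ≠ 0 → qPoch q (c * x) (n + k) ≠ 0 →
      (Dq q)^[k] (fun t => 1 / qPoch q (c * t) n) x =
        c ^ k * qPoch q (q ^ n) k / qPoch q (c * x) (n + k)
  | 0, c, n, x, _, _ => by simp [qPoch_zero]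
  | k + 1, c, n, x, hx, hc => by
    have hD : ∀ j ≤ k, Dq q (fun t => 1 / qPoch q (c * t) n) (q ^ j * x) =
        c * (1 - q ^ n) * (1 / qPoch q (c * (q ^ j * x)) (n + 1)) := fun j hj => by
      refine Dq_inv_qPoch c n (mul_ne_zero (pow_ne_zero j hq) hx) (qPoch_ne_zero_of_le
        (qPoch_mul_pow_mul_ne_zero (n := n + (k + 1) - j) ?_) (by omega))
      rwa [Nat.add_sub_cancel' (by omega)]
    rw [iterate_succ_apply,
      Dq_iterate_congr (G := fun t => c * (1 - q ^ n) * (1 / qPoch q (c * t) (n + 1))) k hD,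
      Dq_iterate_const_mul, Dq_iterate_inv_qPoch hq k hx (by rwa [Nat.add_right_comm]),
      qPoch_succ', ← pow_succ, Nat.add_right_comm, ← Nat.add_assoc]
    ring

lemma qPoch_self_eq_mul {j n : ℕ} (h : j ≤ n) :
    qPoch q q n = qPoch q q (n - j) * qPoch q (q ^ (n - j + 1)) j := by
  rw [pow_succ', ← qPoch_add, Nat.sub_add_cancel h]

lemma pow_choose_two_mul_zpow (hq : q ≠ 0) {i j : ℕ} (hji : j ≤ i) :
    q ^ i.choose 2 * q ^ ((j : ℤ) * ((j : ℤ) - (i : ℤ))) =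
      q ^ j.choose 2 * q ^ (i - j).choose 2 := by
  have h := choose_two_add j (i - j)
  rw [Nat.add_sub_cancel' hji] at h
  simp only [← zpow_natCast, ← zpow_add₀ hq, h]
  congr 1
  push_cast [Nat.cast_sub hji]
  ring

lemma Dq_iterate_qPoch_mul_qPoch (hq : q ≠ 0) (hq' : ¬IsOfFinOrder q) {a b x : ℂ}
    (hx : x ≠ 0) {i n : ℕ} (hin : i ≤ n) (ha : qPoch q (a * x) i ≠ 0)
    (hb : qPoch q (b * x) i ≠ 0) :
    (Dq q)^[i] (fun t => qPoch q (a * t) n * qPoch q (b * t) n) x =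
      qPoch q q n ^ 2 * qPoch q (a * x) n * qPoch q (b * x) n *
          (q ^ i.choose 2 / qPoch q (b * x) i) *
        ∑ j ∈ range (i + 1),
          qBinom q i j * q ^ ((j : ℤ) * ((j : ℤ) - (i : ℤ))) * (-a) ^ j * (-b) ^ (i - j) *
            qPoch q (b * q ^ n * x) j /
            (qPoch q q (n - j) * qPoch q q (n - i + j) * qPoch q (a * x) j) := by
  rw [Dq_iterate_mul hq hq' _ _ i hx, mul_sum]
  refine sum_congr rfl fun j hj => ?_
  have hji : j ≤ i := Nat.lt_succ_iff.mp (mem_range.mp hj)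
  have hjn : j ≤ n := hji.trans hin
  rw [Dq_iterate_qPoch hq j hjn hx,
    Dq_iterate_qPoch hq (i - j) (by omega) (mul_ne_zero (pow_ne_zero j hq) hx),
    show b * q ^ (i - j) * (q ^ j * x) = b * q ^ i * x by
      rw [mul_assoc b, ← mul_assoc (q ^ (i - j)), pow_sub_mul_pow q hji, mul_assoc],
    sq]
  nth_rw 1 [qPoch_self_eq_mul hjn]
  rw [qPoch_self_eq_mul (show i - j ≤ n by omega), show n - (i - j) = n - i + j by omega]
  have hA : qPoch q (a * x) n = qPoch q (a * x) j * qPoch q (a * q ^ j * x) (n - j) := by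
    rw [← qPoch_mul_add, Nat.add_sub_cancel' hjn]
  have hB : qPoch q (b * x) i * qPoch q (b * q ^ i * x) (n - i + j) =
      qPoch q (b * x) n * qPoch q (b * q ^ n * x) j := by
    rw [← qPoch_mul_add, ← qPoch_mul_add]; congr 1; omega
  have hexp := pow_choose_two_mul_zpow hq hji
  have haj := qPoch_ne_zero_of_le ha hji
  rw [hA]
  -- Opaque names keep `field_simp` from rewriting `b * x` to `x * b` inside these factors.
  generalize qPoch q (b * x) i = Bi at hb hB ⊢
  generalize qPoch q (b * x) n = Bn at hB ⊢
  generalize qPoch q (b * q ^ n * x) j = Bq at hB ⊢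
  generalize qPoch q (b * q ^ i * x) (n - i + j) = Bi' at hB ⊢
  field_simp [qPoch_self_ne_zero hq']
  linear_combination (qBinom q i j * (-a) ^ j * qPoch q (q ^ (n - j + 1)) j *
    qPoch q (a * q ^ j * x) (n - j) * (-b) ^ (i - j) * qPoch q (q ^ (n - i + j + 1)) (i - j)) *
    (q ^ j.choose 2 * q ^ (i - j).choose 2 * hB - Bn * Bq * hexp)

lemma Dq_iterate_inv_qPoch_mul_inv_qPoch (hq : q ≠ 0) (hq' : ¬IsOfFinOrder q) {c d y : ℂ}
    (hy : y ≠ 0) {m n : ℕ} (hc : qPoch q (c * y) (n + m) ≠ 0)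
    (hd : qPoch q (d * y) (n + m) ≠ 0) :
    (Dq q)^[m] (fun t => 1 / qPoch q (c * t) n * (1 / qPoch q (d * t) n)) y =
      1 / (qPoch q (c * y) n * qPoch q (d * y) n * qPoch q (d * q ^ n * y) m) *
        ∑ l ∈ range (m + 1),
          qBinom q m l * qPoch q (q ^ n) l * qPoch q (q ^ n) (m - l) *
            qPoch q (d * y) l * c ^ l * d ^ (m - l) / qPoch q (c * q ^ n * y) l := by
  rw [Dq_iterate_mul hq hq' _ _ m hy, mul_sum]
  refine sum_congr rfl fun l hl => ?_
  have hlm : l ≤ m := Nat.lt_succ_iff.mp (mem_range.mp hl)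
  have hd' : qPoch q (d * y) (l + (n + (m - l))) ≠ 0 := by
    rwa [show l + (n + (m - l)) = n + m by omega]
  rw [Dq_iterate_inv_qPoch hq l hy (qPoch_ne_zero_of_le hc (by omega)),
    Dq_iterate_inv_qPoch hq (m - l) (mul_ne_zero (pow_ne_zero l hq) hy)
      (qPoch_mul_pow_mul_ne_zero hd'),
    ← mul_assoc d, qPoch_mul_add q c y n l]
  have hD : qPoch q (d * y) l * qPoch q (d * q ^ l * y) (n + (m - l)) =
      qPoch q (d * y) n * qPoch q (d * q ^ n * y) m := by
    rw [← qPoch_mul_add, ← qPoch_mul_add]; congr 1; omega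
  have hCn := left_ne_zero_of_mul (qPoch_mul_add q c y n m ▸ hc)
  have hCl := qPoch_ne_zero_of_le (right_ne_zero_of_mul (qPoch_mul_add q c y n m ▸ hc)) hlm
  have hDl := left_ne_zero_of_mul (qPoch_mul_add q d y l _ ▸ hd')
  have hDr := right_ne_zero_of_mul (qPoch_mul_add q d y l _ ▸ hd')
  rw [mul_assoc (qPoch q (c * y) n), ← hD]
  generalize qPoch q (c * y) n = Cn at hCn ⊢
  generalize qPoch q (c * q ^ n * y) l = Cl at hCl ⊢
  generalize qPoch q (d * y) l = Dl at hDl ⊢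
  generalize qPoch q (d * q ^ l * y) (n + (m - l)) = Dr at hDr ⊢
  field_simp

theorem stmt5 (q a b c d x : ℂ) (hq0 : 0 < ‖q‖) (hq1 : ‖q‖ < 1)
    (hx : x ≠ 0) (k n : ℕ) (hkn : k ≤ n)
    (ha : ∀ j : ℕ, j < k → 1 - a * q ^ j * x ≠ 0)
    (hb : ∀ j : ℕ, j < k → 1 - b * q ^ j * x ≠ 0)
    (hc : ∀ j : ℕ, j < n + k → 1 - c * q ^ j * x ≠ 0)
    (hd : ∀ j : ℕ, j < n + k → 1 - d * q ^ j * x ≠ 0) :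
    (Dq q)^[k]
        (fun t => qPoch q (a * t) n * qPoch q (b * t) n /
          (qPoch q (c * t) n * qPoch q (d * t) n)) x =
      qPoch q q n ^ 2 * qPoch q (a * x) n * qPoch q (b * x) n *
        ∑ i ∈ Finset.range (k + 1),
          qBinom q k i * (q ^ (i.choose 2) / qPoch q (b * x) i) *
            (∑ j ∈ Finset.range (i + 1),
              qBinom q i j * q ^ ((j : ℤ) * ((j : ℤ) - (i : ℤ))) * (-a) ^ j * (-b) ^ (i - j) *
                qPoch q (b * q ^ n * x) j /
                (qPoch q q (n - j) * qPoch q q (n - i + j) * qPoch q (a * x) j)) *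
            (1 / (qPoch q (c * q ^ i * x) n * qPoch q (d * q ^ i * x) n *
              qPoch q (d * q ^ (n + i) * x) (k - i))) *
            ∑ l ∈ Finset.range (k - i + 1),
              qBinom q (k - i) l * qPoch q (q ^ n) l * qPoch q (q ^ n) (k - i - l) *
                qPoch q (d * q ^ i * x) l * c ^ l * d ^ (k - i - l) /
                qPoch q (c * q ^ (n + i) * x) l := by
  have hq : q ≠ 0 := norm_pos_iff.mp hq0
  have hq' : ¬IsOfFinOrder q := fun h => hq1.ne h.norm_eq_one
  have hne {e : ℂ} {m : ℕ} (he : ∀ j < m, 1 - e * q ^ j * x ≠ 0) :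
      qPoch q (e * x) m ≠ 0 :=
    qPoch_ne_zero fun j hj => mul_right_comm e x (q ^ j) ▸ he j hj
  have hsplit : (fun t => qPoch q (a * t) n * qPoch q (b * t) n /
      (qPoch q (c * t) n * qPoch q (d * t) n)) = fun t => qPoch q (a * t) n * qPoch q (b * t) n *
        (1 / qPoch q (c * t) n * (1 / qPoch q (d * t) n)) := by
    funext t; ring
  rw [hsplit, Dq_iterate_mul hq hq' _ _ k hx, mul_sum]
  refine sum_congr rfl fun i hi => ?_
  have hik : i ≤ k := Nat.lt_succ_iff.mp (mem_range.mp hi)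
  have hshift {e : ℂ} (he : ∀ j < n + k, 1 - e * q ^ j * x ≠ 0) :
      qPoch q (e * (q ^ i * x)) (n + (k - i)) ≠ 0 :=
    qPoch_mul_pow_mul_ne_zero (by rw [show i + (n + (k - i)) = n + k by omega]; exact hne he)
  rw [Dq_iterate_qPoch_mul_qPoch hq hq' hx (hik.trans hkn)
      (qPoch_ne_zero_of_le (hne ha) hik) (qPoch_ne_zero_of_le (hne hb) hik),
    Dq_iterate_inv_qPoch_mul_inv_qPoch hq hq' (mul_ne_zero (pow_ne_zero i hq) hx)
      (hshift hc) (hshift hd)]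
  have e₁ (e : ℂ) : e * (q ^ i * x) = e * q ^ i * x := (mul_assoc ..).symm
  have e₂ (e : ℂ) : e * q ^ n * (q ^ i * x) = e * q ^ (n + i) * x := by ring
  rw [e₂ c, e₂ d, e₁ c, e₁ d]
  ring
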